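/- arXiv:1902.02921 — 5 statements merged into one kernel-verified Lean document; each statement's English description precedes it below -/
import Mathlib

section
/- Let D be a binary dataset, let o be a linear order on the K attributes, and let 𝒞 = {C_1,…,C_L} ∈ Seg(o) be a collection of item segments such that q_D(S_i = v) > 0 for every i = 1,…,L−1 and every binary vector v of length |S_i|. Define p* on {0,1}^K by p*(A = t) = (∏_{i=1}^{L} q_D(C_i = t_{C_i})) / (∏_{i=1}^{L−1} q_D(S_i = t_{S_i})). Then p* is a probability distribution, p* belongs to M(𝒞), p*(C_i = v) = q_D(C_i = v) for every i and every v, and p* is the unique member of M(𝒞) whose marginals on every C_i agree with those of q_D. -/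
/-!
Write `p* = q(C_1) ∏ᵢ q(C_{i+1}) / q(S_i)` as a chain of conditional distributions. Summing out
the attributes after `C_m` telescopes from the right to `1`, since each factor
`q(C_{i+1}) / q(S_i)` sums to one over the attributes of `C_{i+1} \ S_i`; summing out the
attributes before `C_m` telescopes from the left to `q(C_m)`. So `p*` has the marginals of `q_D`
on every `C_i`, hence on every `S_i ⊆ C_i`. For any `p` with these marginals the defining identity
of `M(𝒞)` reads `p(t) ∏ q(S_i = t) = ∏ q(C_i = t)`, which forces `p = p*`.
-/

open Finset

/-- The marginal probability `p(X = v)`: the probability that the coordinates in `X`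
agree with `v`. -/
noncomputable def marg {K : ℕ} (p : (Fin K → Bool) → ℝ) (X : Finset (Fin K))
    (v : Fin K → Bool) : ℝ :=
  ∑ t ∈ Finset.univ.filter (fun t : Fin K → Bool => ∀ i ∈ X, t i = v i), p t

/-- `p` is a probability distribution on `{0,1}^K`. -/
def IsDist {K : ℕ} (p : (Fin K → Bool) → ℝ) : Prop :=
  (∀ t, 0 ≤ p t) ∧ ∑ t : Fin K → Bool, p t = 1

/-- The empirical distribution of a dataset `D`. -/
noncomputable def empDist {K : ℕ} (D : Multiset (Fin K → Bool)) : (Fin K → Bool) → ℝ :=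
  fun v => (D.count v : ℝ) / (Multiset.card D : ℝ)

/-- The entropy (base 2) of the marginal of `p` on the attribute set `X`,
summing over representative vectors which are `false` outside of `X`. -/
noncomputable def segEntropy {K : ℕ} (p : (Fin K → Bool) → ℝ) (X : Finset (Fin K)) : ℝ :=
  -∑ v ∈ Finset.univ.filter (fun v : Fin K → Bool => ∀ i, i ∉ X → v i = false),
      marg p X v * Real.logb 2 (marg p X v)

/-- The item segment of the attributes at positions `a,…,b` in the order `o`. -/
def segIv {K : ℕ} (o : Equiv.Perm (Fin K)) (a b : ℕ) : Finset (Fin K) :=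
  (Finset.univ.filter (fun k : Fin K => a ≤ (k : ℕ) ∧ (k : ℕ) ≤ b)).image o

/-- A collection `𝒞 = {C_1, …, C_L} ∈ Seg(o)` of item segments covering all attributes,
forming an antichain, listed in the order of their first attribute.  The `i`-th segment
(for `0 ≤ i < L`) consists of the positions `s i, …, e i` in the order `o`. -/
structure SegColl (K : ℕ) where
  /-- number of segments -/
  L : ℕ
  hL : 0 < L
  /-- start position of each segment -/
  s : ℕ → ℕ
  /-- end position of each segment -/
  e : ℕ → ℕ
  s_mono : ∀ i, i + 1 < L → s i < s (i + 1)
  e_mono : ∀ i, i + 1 < L → e i < e (i + 1)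
  s_le_e : ∀ i, i < L → s i ≤ e i
  s_first : s 0 = 0
  e_last : e (L - 1) = K - 1
  e_lt : ∀ i, i < L → e i < K
  covers : ∀ i, i + 1 < L → s (i + 1) ≤ e i + 1

/-- The `i`-th item segment `C_{i+1}` of the collection, under the order `o`. -/
def SegColl.seg {K : ℕ} (𝒞 : SegColl K) (o : Equiv.Perm (Fin K)) (i : ℕ) : Finset (Fin K) :=
  segIv o (𝒞.s i) (𝒞.e i)

/-- The intersection `S_i = C_i ∩ C_{i+1}` of consecutive segments. -/
def SegColl.ovl {K : ℕ} (𝒞 : SegColl K) (o : Equiv.Perm (Fin K)) (i : ℕ) : Finset (Fin K) :=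
  𝒞.seg o i ∩ 𝒞.seg o (i + 1)

/-- Membership of a distribution `p` in the model `M(𝒞)`:
`p(A = t) ∏_{i=1}^{L-1} p(S_i = t) = ∏_{i=1}^{L} p(C_i = t)` for all `t`. -/
def memModel {K : ℕ} (o : Equiv.Perm (Fin K)) (𝒞 : SegColl K)
    (p : (Fin K → Bool) → ℝ) : Prop :=
  IsDist p ∧ ∀ t : Fin K → Bool,
    p t * ∏ i ∈ Finset.range (𝒞.L - 1), marg p (𝒞.ovl o i) t
      = ∏ i ∈ Finset.range 𝒞.L, marg p (𝒞.seg o i) t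

/-- The number of free parameters `df(𝒞)`. -/
def SegColl.df {K : ℕ} (𝒞 : SegColl K) (o : Equiv.Perm (Fin K)) : ℤ :=
  (∑ i ∈ Finset.range 𝒞.L, ((2 : ℤ) ^ (𝒞.seg o i).card - 1))
    - ∑ i ∈ Finset.range (𝒞.L - 1), ((2 : ℤ) ^ (𝒞.ovl o i).card - 1)

/-- The score of a single item segment `C`:
`score(C) = |D| H(C; D) + (log₂|D|/2)(2^{|C|} - 1)`. -/
noncomputable def segScore {K : ℕ} (D : Multiset (Fin K → Bool)) (C : Finset (Fin K)) : ℝ :=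
  (Multiset.card D : ℝ) * segEntropy (empDist D) C
    + Real.logb 2 (Multiset.card D) / 2 * ((2 : ℝ) ^ C.card - 1)

/-- The score of a collection: `score(𝒞) = ∑ score(C_i) - ∑ score(S_i)`. -/
noncomputable def collScore {K : ℕ} (D : Multiset (Fin K → Bool)) (o : Equiv.Perm (Fin K))
    (𝒞 : SegColl K) : ℝ :=
  ∑ i ∈ Finset.range 𝒞.L, segScore D (𝒞.seg o i)
    - ∑ i ∈ Finset.range (𝒞.L - 1), segScore D (𝒞.ovl o i)

section AgreeOff

variable {ι β : Type*} [Fintype ι] [DecidableEq ι] [Fintype β] [DecidableEq β]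

def agreeOff (B : Finset ι) (v : ι → β) : Finset (ι → β) :=
  univ.filter fun w => ∀ i ∉ B, w i = v i

@[simp]
lemma mem_agreeOff {B : Finset ι} {v w : ι → β} : w ∈ agreeOff B v ↔ ∀ i ∉ B, w i = v i := by
  simp [agreeOff]

@[simp]
lemma agreeOff_empty (v : ι → β) : agreeOff ∅ v = {v} := by
  ext w
  simp [funext_iff]

lemma eq_on_of_mem_agreeOff {B X : Finset ι} {v w : ι → β} (hw : w ∈ agreeOff B v)
    (hX : Disjoint X B) : ∀ i ∈ X, v i = w i :=
  fun i hi => (mem_agreeOff.mp hw i (disjoint_left.mp hX hi)).symm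

lemma sum_agreeOff_union {M : Type*} [AddCommMonoid M] {B₁ B₂ : Finset ι}
    (hd : Disjoint B₁ B₂) (v : ι → β) (F : (ι → β) → M) :
    ∑ w ∈ agreeOff (B₁ ∪ B₂) v, F w = ∑ u ∈ agreeOff B₁ v, ∑ w ∈ agreeOff B₂ u, F w := by
  have hmaps : ∀ w ∈ agreeOff (B₁ ∪ B₂) v, B₁.piecewise w v ∈ agreeOff B₁ v := by
    intro w _
    simp +contextual [Finset.piecewise]
  rw [← sum_fiberwise_of_maps_to hmaps]
  refine sum_congr rfl fun u hu => ?_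
  congr 1
  ext w
  simp only [mem_agreeOff] at hu
  simp only [mem_filter, mem_agreeOff, mem_union, not_or, funext_iff, Finset.piecewise]
  constructor
  · rintro ⟨hw, hwu⟩ i hi
    by_cases h : i ∈ B₁
    · simpa [h] using hwu i
    · rw [hw i ⟨h, hi⟩, hu i h]
  · intro hw
    refine ⟨fun i hi => by rw [hw i hi.2, hu i hi.1], fun i => ?_⟩
    by_cases h : i ∈ B₁
    · simp [h, hw i (disjoint_left.mp hd h)]
    · simp [h, hu i h]

end AgreeOff

section Marginal

variable {K : ℕ}

lemma marg_eq_sum_agreeOff (p : (Fin K → Bool) → ℝ) (X : Finset (Fin K)) (v : Fin K → Bool) :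
    marg p X v = ∑ w ∈ agreeOff Xᶜ v, p w := by
  unfold marg agreeOff
  congr 1
  ext t
  simp

lemma marg_empty (p : (Fin K → Bool) → ℝ) (v : Fin K → Bool) :
    marg p ∅ v = ∑ t, p t := by
  simp [marg]

lemma marg_congr (p : (Fin K → Bool) → ℝ) {X : Finset (Fin K)} {u v : Fin K → Bool}
    (h : ∀ i ∈ X, u i = v i) : marg p X u = marg p X v := by
  unfold marg
  congr 1
  ext t
  simp +contextual [h]

lemma marg_nonneg {p : (Fin K → Bool) → ℝ} (hp : ∀ t, 0 ≤ p t) (X : Finset (Fin K))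
    (v : Fin K → Bool) : 0 ≤ marg p X v :=
  sum_nonneg fun _ _ => hp _

lemma marg_eq_sum_marg_union (p : (Fin K → Bool) → ℝ) {A B : Finset (Fin K)}
    (hd : Disjoint A B) (v : Fin K → Bool) :
    marg p A v = ∑ u ∈ agreeOff B v, marg p (A ∪ B) u := by
  have hcompl : Aᶜ = B ∪ (A ∪ B)ᶜ := by
    ext i
    have hAB : i ∈ A → i ∉ B := fun h => disjoint_left.mp hd h
    simp only [mem_compl, mem_union]
    tauto
  rw [marg_eq_sum_agreeOff, hcompl,
    sum_agreeOff_union (disjoint_compl_right.mono_left subset_union_right)]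
  simp only [marg_eq_sum_agreeOff]

lemma marg_eq_of_subset {p q : (Fin K → Bool) → ℝ} {X Y : Finset (Fin K)} (hXY : X ⊆ Y)
    (h : ∀ v, marg p Y v = marg q Y v) (v : Fin K → Bool) : marg p X v = marg q X v := by
  rw [marg_eq_sum_marg_union p disjoint_sdiff, marg_eq_sum_marg_union q disjoint_sdiff,
    union_sdiff_of_subset hXY]
  exact sum_congr rfl fun u _ => h u

lemma isDist_empDist {D : Multiset (Fin K → Bool)} (hD : D ≠ 0) : IsDist (empDist D) := by
  refine ⟨fun t => by unfold empDist; positivity, ?_⟩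
  have hcount : ∑ t, (D.count t : ℝ) = Multiset.card D := by
    rw [← Nat.cast_sum, ← Multiset.toFinset_sum_count_eq D]
    refine congrArg _ (sum_subset (subset_univ _) fun t _ ht => ?_).symm
    simpa using ht
  unfold empDist
  rw [← sum_div, hcount, div_self (by simpa using hD)]

end Marginal

section Positions

variable {K : ℕ} (o : Equiv.Perm (Fin K))

def posIco (a b : ℕ) : Finset (Fin K) :=
  univ.filter fun i => a ≤ (o.symm i : ℕ) ∧ (o.symm i : ℕ) < b

variable {o}

@[simp]
lemma mem_posIco {a b : ℕ} {i : Fin K} :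
    i ∈ posIco o a b ↔ a ≤ (o.symm i : ℕ) ∧ (o.symm i : ℕ) < b := by
  simp [posIco]

lemma posIco_eq_empty {a b : ℕ} (h : b ≤ a) : posIco o a b = ∅ := by
  ext i
  simp only [mem_posIco, notMem_empty, iff_false]
  omega

lemma posIco_union_posIco {a b c : ℕ} (hab : a ≤ b) (hbc : b ≤ c) :
    posIco o a b ∪ posIco o b c = posIco o a c := by
  ext i
  simp only [mem_union, mem_posIco]
  omega

lemma disjoint_posIco {a b c d : ℕ} (h : b ≤ c) : Disjoint (posIco o a b) (posIco o c d) := by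
  rw [disjoint_left]
  intro i
  simp only [mem_posIco]
  omega

lemma posIco_subset_posIco {a b a' b' : ℕ} (ha : a' ≤ a) (hb : b ≤ b') :
    posIco o a b ⊆ posIco o a' b' := by
  intro i
  simp only [mem_posIco]
  omega

lemma compl_posIco (a b : ℕ) : (posIco o a b)ᶜ = posIco o 0 a ∪ posIco o b K := by
  ext i
  have := (o.symm i).isLt
  simp only [mem_compl, mem_union, mem_posIco]
  omega

end Positions

namespace SegColl

variable {K : ℕ} (𝒞 : SegColl K) (o : Equiv.Perm (Fin K))

lemma seg_eq_posIco (m : ℕ) : 𝒞.seg o m = posIco o (𝒞.s m) (𝒞.e m + 1) := by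
  ext i
  simp only [seg, segIv, mem_image, mem_filter, mem_univ, true_and, mem_posIco]
  constructor
  · rintro ⟨k, hk, rfl⟩
    simp only [Equiv.symm_apply_apply]
    omega
  · intro h
    exact ⟨o.symm i, by omega, o.apply_symm_apply i⟩

variable {𝒞} in
lemma ovl_eq_posIco {m : ℕ} (hm : m + 1 < 𝒞.L) :
    𝒞.ovl o m = posIco o (𝒞.s (m + 1)) (𝒞.e m + 1) := by
  have := 𝒞.s_mono m hm
  have := 𝒞.e_mono m hm
  ext i
  simp only [ovl, seg_eq_posIco, mem_inter, mem_posIco]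
  omega

end SegColl

section Chain

variable {K : ℕ} (q : (Fin K → Bool) → ℝ) (𝒞 : SegColl K) (o : Equiv.Perm (Fin K))

-- In the paper's 1-based indexing, the factor `q(C_{m+2} = t) / q(S_{m+1} = t)`.
noncomputable def condFac (m : ℕ) (t : Fin K → Bool) : ℝ :=
  marg q (𝒞.seg o (m + 1)) t / marg q (𝒞.ovl o m) t

noncomputable def headProd (m : ℕ) (t : Fin K → Bool) : ℝ :=
  marg q (𝒞.seg o 0) t * ∏ i ∈ range m, condFac q 𝒞 o i t

lemma headProd_succ (m : ℕ) (t : Fin K → Bool) :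
    headProd q 𝒞 o (m + 1) t = headProd q 𝒞 o m t * condFac q 𝒞 o m t := by
  rw [headProd, headProd, prod_range_succ, mul_assoc]

lemma headProd_eq_mul_prod_Ico {m n : ℕ} (hmn : m ≤ n) (t : Fin K → Bool) :
    headProd q 𝒞 o n t = headProd q 𝒞 o m t * ∏ i ∈ Ico m n, condFac q 𝒞 o i t := by
  rw [headProd, headProd, ← prod_range_mul_prod_Ico _ hmn, mul_assoc]

lemma prod_div_prod_eq_headProd (t : Fin K → Bool) :
    (∏ i ∈ range 𝒞.L, marg q (𝒞.seg o i) t) / ∏ i ∈ range (𝒞.L - 1), marg q (𝒞.ovl o i) t =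
      headProd q 𝒞 o (𝒞.L - 1) t := by
  obtain ⟨n, hn⟩ : ∃ n, 𝒞.L = n + 1 := Nat.exists_eq_add_one.mpr 𝒞.hL
  rw [hn, Nat.add_sub_cancel, prod_range_succ', mul_div_right_comm, ← prod_div_distrib,
    headProd, mul_comm]
  rfl

variable {q 𝒞 o}

lemma condFac_congr {m : ℕ} {u w : Fin K → Bool} (h : ∀ i ∈ 𝒞.seg o (m + 1), u i = w i) :
    condFac q 𝒞 o m u = condFac q 𝒞 o m w := by
  rw [condFac, condFac, marg_congr q h,
    marg_congr q (X := 𝒞.ovl o m) fun i hi => h i (inter_subset_right hi)]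

lemma headProd_congr {m : ℕ} (hm : m < 𝒞.L) {u w : Fin K → Bool}
    (h : ∀ i ∈ posIco o 0 (𝒞.e m + 1), u i = w i) :
    headProd q 𝒞 o m u = headProd q 𝒞 o m w := by
  induction m with
  | zero =>
    rw [headProd, headProd, marg_congr q (by rwa [𝒞.seg_eq_posIco, 𝒞.s_first]),
      range_zero, prod_empty, prod_empty]
  | succ m ih =>
    have he := 𝒞.e_mono m hm
    rw [headProd_succ, headProd_succ,
      ih (by omega) fun i hi => h i (posIco_subset_posIco le_rfl (by omega) hi),
      condFac_congr fun i hi => h i ?_]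
    rw [𝒞.seg_eq_posIco] at hi
    exact posIco_subset_posIco (Nat.zero_le _) le_rfl hi

variable (hq : ∀ i < 𝒞.L - 1, ∀ v, marg q (𝒞.ovl o i) v ≠ 0)
include hq

lemma sum_condFac {m : ℕ} (hm : m + 1 < 𝒞.L) (v : Fin K → Bool) :
    ∑ u ∈ agreeOff (posIco o (𝒞.e m + 1) (𝒞.e (m + 1) + 1)) v, condFac q 𝒞 o m u = 1 := by
  have hcov := 𝒞.covers m hm
  have he := 𝒞.e_mono m hm
  have hd : Disjoint (𝒞.ovl o m) (posIco o (𝒞.e m + 1) (𝒞.e (m + 1) + 1)) := by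
    rw [SegColl.ovl_eq_posIco o hm]
    exact disjoint_posIco le_rfl
  have hden : ∀ u ∈ agreeOff (posIco o (𝒞.e m + 1) (𝒞.e (m + 1) + 1)) v,
      marg q (𝒞.ovl o m) u = marg q (𝒞.ovl o m) v := fun u hu =>
    (marg_congr q (eq_on_of_mem_agreeOff hu hd)).symm
  have hunion : 𝒞.ovl o m ∪ posIco o (𝒞.e m + 1) (𝒞.e (m + 1) + 1) = 𝒞.seg o (m + 1) := by
    rw [SegColl.ovl_eq_posIco o hm, posIco_union_posIco hcov (by omega), 𝒞.seg_eq_posIco]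
  simp only [condFac]
  rw [sum_congr rfl fun u hu => by rw [hden u hu], ← sum_div, ← hunion,
    ← marg_eq_sum_marg_union q hd, div_self (hq m (by omega) v)]

lemma sum_prod_condFac {m : ℕ} (hm : m < 𝒞.L) (v : Fin K → Bool) :
    ∑ w ∈ agreeOff (posIco o (𝒞.e m + 1) K) v, ∏ i ∈ Ico m (𝒞.L - 1), condFac q 𝒞 o i w = 1 := by
  induction (by omega : m ≤ 𝒞.L - 1) using Nat.decreasingInduction generalizing v with
  | self =>
    have := 𝒞.e_lt _ (Nat.sub_one_lt 𝒞.hL.ne')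
    have := 𝒞.e_last
    rw [posIco_eq_empty (by omega), agreeOff_empty, sum_singleton, Ico_self, prod_empty]
  | of_succ k hk ih =>
    have hk' : k + 1 < 𝒞.L := by omega
    have he := 𝒞.e_mono k hk'
    have := 𝒞.e_lt _ hk'
    have hinner : ∀ u, ∑ w ∈ agreeOff (posIco o (𝒞.e (k + 1) + 1) K) u,
        ∏ i ∈ Ico k (𝒞.L - 1), condFac q 𝒞 o i w = condFac q 𝒞 o k u := by
      intro u
      have hd : Disjoint (𝒞.seg o (k + 1)) (posIco o (𝒞.e (k + 1) + 1) K) := by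
        rw [𝒞.seg_eq_posIco]
        exact disjoint_posIco le_rfl
      rw [sum_congr rfl fun w hw => by
          rw [prod_eq_prod_Ico_succ_bot hk, ← condFac_congr (eq_on_of_mem_agreeOff hw hd)],
        ← mul_sum, ih hk' u, mul_one]
    rw [← posIco_union_posIco (b := 𝒞.e (k + 1) + 1) (by omega) (by omega),
      sum_agreeOff_union (disjoint_posIco le_rfl)]
    simp_rw [hinner]
    exact sum_condFac hq hk' v

lemma sum_headProd {m : ℕ} (hm : m < 𝒞.L) (v : Fin K → Bool) :
    ∑ u ∈ agreeOff (posIco o 0 (𝒞.s m)) v, headProd q 𝒞 o m u = marg q (𝒞.seg o m) v := by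
  induction m generalizing v with
  | zero =>
    rw [𝒞.s_first, posIco_eq_empty le_rfl, agreeOff_empty, sum_singleton, headProd,
      range_zero, prod_empty, mul_one]
  | succ m ih =>
    have hs := 𝒞.s_mono m hm
    have hcov := 𝒞.covers m hm
    have hse := 𝒞.s_le_e m (by omega)
    have hfactor : ∀ u ∈ agreeOff (posIco o 0 (𝒞.s (m + 1))) v,
        headProd q 𝒞 o (m + 1) u = headProd q 𝒞 o m u * condFac q 𝒞 o m v := by
      intro u hu
      rw [headProd_succ, ← condFac_congr (eq_on_of_mem_agreeOff hu ?_)]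
      rw [𝒞.seg_eq_posIco]
      exact disjoint_comm.mp (disjoint_posIco le_rfl)
    have hd : Disjoint (𝒞.ovl o m) (posIco o (𝒞.s m) (𝒞.s (m + 1))) := by
      rw [SegColl.ovl_eq_posIco o hm]
      exact disjoint_comm.mp (disjoint_posIco le_rfl)
    have hunion : 𝒞.ovl o m ∪ posIco o (𝒞.s m) (𝒞.s (m + 1)) = 𝒞.seg o m := by
      rw [union_comm, SegColl.ovl_eq_posIco o hm, posIco_union_posIco hs.le hcov,
        𝒞.seg_eq_posIco]
    have hmarg : ∑ u ∈ agreeOff (posIco o 0 (𝒞.s (m + 1))) v, headProd q 𝒞 o m u =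
        marg q (𝒞.ovl o m) v := by
      rw [← posIco_union_posIco (b := 𝒞.s m) (Nat.zero_le _) hs.le, union_comm,
        sum_agreeOff_union (disjoint_comm.mp (disjoint_posIco le_rfl))]
      simp_rw [ih (by omega)]
      rw [marg_eq_sum_marg_union q hd, hunion]
    rw [sum_congr rfl hfactor, ← sum_mul, hmarg, condFac,
      mul_div_cancel₀ _ (hq m (by omega) v)]

lemma marg_headProd {m : ℕ} (hm : m < 𝒞.L) (v : Fin K → Bool) :
    marg (headProd q 𝒞 o (𝒞.L - 1)) (𝒞.seg o m) v = marg q (𝒞.seg o m) v := by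
  have hinner : ∀ u, ∑ w ∈ agreeOff (posIco o (𝒞.e m + 1) K) u,
      headProd q 𝒞 o (𝒞.L - 1) w = headProd q 𝒞 o m u := by
    intro u
    rw [sum_congr rfl fun w hw => by
        rw [headProd_eq_mul_prod_Ico q 𝒞 o (by omega : m ≤ 𝒞.L - 1),
          ← headProd_congr hm (eq_on_of_mem_agreeOff hw (disjoint_posIco le_rfl))],
      ← mul_sum, sum_prod_condFac hq hm u, mul_one]
  rw [marg_eq_sum_agreeOff, 𝒞.seg_eq_posIco, compl_posIco,
    sum_agreeOff_union (disjoint_posIco ((𝒞.s_le_e m hm).trans (Nat.le_succ _)))]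
  simp_rw [hinner]
  rw [← 𝒞.seg_eq_posIco]
  exact sum_headProd hq hm v

end Chain

lemma model_identity_iff {K : ℕ} {p q : (Fin K → Bool) → ℝ} {𝒞 : SegColl K}
    {o : Equiv.Perm (Fin K)} (hq : ∀ i < 𝒞.L - 1, ∀ v, marg q (𝒞.ovl o i) v ≠ 0)
    (hpq : ∀ i < 𝒞.L, ∀ v, marg p (𝒞.seg o i) v = marg q (𝒞.seg o i) v) (t : Fin K → Bool) :
    p t * ∏ i ∈ range (𝒞.L - 1), marg p (𝒞.ovl o i) t = ∏ i ∈ range 𝒞.L, marg p (𝒞.seg o i) t ↔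
      p t = (∏ i ∈ range 𝒞.L, marg q (𝒞.seg o i) t) /
        ∏ i ∈ range (𝒞.L - 1), marg q (𝒞.ovl o i) t := by
  have hovl : ∀ i ∈ range (𝒞.L - 1), marg p (𝒞.ovl o i) t = marg q (𝒞.ovl o i) t :=
    fun i hi => marg_eq_of_subset inter_subset_left (hpq i (by simp at hi; omega)) t
  rw [prod_congr rfl hovl, prod_congr rfl fun i hi => hpq i (mem_range.mp hi) t,
    eq_div_iff (prod_ne_zero_iff.mpr fun i hi => hq i (mem_range.mp hi) t)]

/-- The distribution `p*` defined from the empirical marginals of the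
segments is a probability distribution, belongs to `M(𝒞)`, has the empirical marginals
on each segment, and is the unique such member of `M(𝒞)`. -/
theorem pstar_is_unique_mle {K : ℕ} (D : Multiset (Fin K → Bool)) (hD : D ≠ 0)
    (o : Equiv.Perm (Fin K)) (𝒞 : SegColl K)
    (hpos : ∀ i < 𝒞.L - 1, ∀ v : Fin K → Bool, 0 < marg (empDist D) (𝒞.ovl o i) v)
    (pstar : (Fin K → Bool) → ℝ)
    (hpstar : ∀ t : Fin K → Bool, pstar t =
      (∏ i ∈ Finset.range 𝒞.L, marg (empDist D) (𝒞.seg o i) t) /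
        ∏ i ∈ Finset.range (𝒞.L - 1), marg (empDist D) (𝒞.ovl o i) t) :
    IsDist pstar ∧
    memModel o 𝒞 pstar ∧
    (∀ i < 𝒞.L, ∀ v : Fin K → Bool,
      marg pstar (𝒞.seg o i) v = marg (empDist D) (𝒞.seg o i) v) ∧
    (∀ p : (Fin K → Bool) → ℝ, memModel o 𝒞 p →
      (∀ i < 𝒞.L, ∀ v : Fin K → Bool,
        marg p (𝒞.seg o i) v = marg (empDist D) (𝒞.seg o i) v) →
      p = pstar) := by
  set q := empDist D
  have hq : IsDist q := isDist_empDist hD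
  have hovl : ∀ i < 𝒞.L - 1, ∀ v, marg q (𝒞.ovl o i) v ≠ 0 := fun i hi v => (hpos i hi v).ne'
  have hfac : pstar = headProd q 𝒞 o (𝒞.L - 1) :=
    funext fun t => (hpstar t).trans (prod_div_prod_eq_headProd q 𝒞 o t)
  have hseg : ∀ i < 𝒞.L, ∀ v, marg pstar (𝒞.seg o i) v = marg q (𝒞.seg o i) v := by
    rw [hfac]
    exact fun i hi => marg_headProd hovl hi
  have hdist : IsDist pstar := by
    refine ⟨fun t => ?_, ?_⟩
    · rw [hpstar t]
      exact div_nonneg (prod_nonneg fun i _ => marg_nonneg hq.1 _ _)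
        (prod_nonneg fun i _ => marg_nonneg hq.1 _ _)
    · rw [← marg_empty pstar (fun _ => false),
        marg_eq_of_subset (empty_subset (𝒞.seg o 0)) (hseg 0 𝒞.hL), marg_empty, hq.2]
  refine ⟨hdist, ⟨hdist, fun t => (model_identity_iff hovl hseg t).mpr (hpstar t)⟩, hseg, ?_⟩
  intro p hp hpq
  funext t
  exact (model_identity_iff hovl hpq t).mp (hp.2 t) |>.trans (hpstar t).symm
end

section
/- Let D be a binary dataset, o a linear order on the K attributes, and 𝒞 = {C_1,…,C_L} ∈ Seg(o) with q_D(S_i = v) > 0 for all i and v, and let p* ∈ M(𝒞) be the distribution with p*(A = t) = (∏_i q_D(C_i = t_{C_i})) / (∏_i q_D(S_i = t_{S_i})). Then for every strictly positive distribution p ∈ M(𝒞): ∑_{t∈D} log₂ p*(A = t) − ∑_{t∈D} log₂ p(A = t) = |D| · ∑_{v} p*(A = v) log₂ (p*(A = v)/p(A = v)). In particular this difference is non-negative, and it equals 0 if and only if p = p*; hence p* maximizes the likelihood of D over M(𝒞). -/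
open Finset

/-!
Write `q` for the empirical distribution. The log-likelihood difference is
`|D| · ∑ q (log₂ p* - log₂ p)`. Both `log₂ p` and, on the support of `p*` (which contains that of
`q`), `log₂ p*` are sums of functions of a single segment `C_i` minus sums of functions of a single
overlap `S_i`. Such functions have the same expectation under `p*` and `q`, because `p*` has the
same marginal on every `C_j` as `q`: summing the product formula over the attributes that the
first (or last) segment of a chain `C_a, …, C_b` does not share with the rest turns its factor
`q(C_a) / q(S_a)` into `q(S_a) / q(S_a) = 1`, and peeling segments from both ends leaves `q(C_j)`.
So the difference is `|D|` times the Kullback–Leibler divergence of `p` from `p*`, and Gibbs'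
inequality `p · klFun (p* / p) ≥ 0` gives the rest.
-/

section Marginals

variable {K : ℕ}

/-- The vectors vanishing off `B`: one representative of each assignment of values to `B`. -/
def vecsOn (B : Finset (Fin K)) : Finset (Fin K → Bool) :=
  univ.filter fun u => ∀ i ∉ B, u i = false

lemma mem_vecsOn {B : Finset (Fin K)} {u : Fin K → Bool} :
    u ∈ vecsOn B ↔ ∀ i ∉ B, u i = false := by
  simp [vecsOn]

lemma vecsOn_univ : vecsOn (univ : Finset (Fin K)) = univ := by
  ext u; simp [vecsOn]

lemma piecewise_mem_vecsOn (B : Finset (Fin K)) (t : Fin K → Bool) :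
    B.piecewise t (fun _ => false) ∈ vecsOn B :=
  mem_vecsOn.2 fun i hi => by simp [hi]

lemma sum_vecsOn_union {B V : Finset (Fin K)} (h : Disjoint B V) (f : (Fin K → Bool) → ℝ) :
    ∑ t ∈ vecsOn (B ∪ V), f t = ∑ u ∈ vecsOn B, ∑ w ∈ vecsOn V, f (B.piecewise u w) := by
  have hsplit : ∀ t ∈ vecsOn (B ∪ V),
      B.piecewise (B.piecewise t fun _ => false) (V.piecewise t fun _ => false) = t := by
    intro t ht
    funext i
    have := mem_vecsOn.1 ht i
    by_cases hB : i ∈ B <;> by_cases hV : i ∈ V <;> simp_all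
  rw [← sum_product']
  refine sum_nbij' (fun t => (B.piecewise t fun _ => false, V.piecewise t fun _ => false))
    (fun x => B.piecewise x.1 x.2) (fun t _ => by simp [piecewise_mem_vecsOn]) ?_ hsplit ?_
    fun t ht => by rw [hsplit t ht]
  · rintro ⟨u, w⟩ huw
    simp only [mem_product, mem_vecsOn] at huw ⊢
    intro i hi
    simp only [mem_union, not_or] at hi
    simp [hi.1, huw.2 i hi.2]
  · rintro ⟨u, w⟩ huw
    simp only [mem_product, mem_vecsOn] at huw
    ext i
    · by_cases hB : i ∈ B <;> simp_all
    · by_cases hV : i ∈ V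
      · simp [hV, disjoint_right.1 h hV]
      · simp [hV, huw.2 i hV]

lemma marg_univ (p : (Fin K → Bool) → ℝ) (v : Fin K → Bool) : marg p univ v = p v := by
  rw [marg, sum_eq_single_of_mem v (by simp)]
  intro t ht htv
  exact absurd (funext fun i => (mem_filter.1 ht).2 i (mem_univ i)) htv

lemma dependsOn_marg (p : (Fin K → Bool) → ℝ) (X : Finset (Fin K)) :
    DependsOn (marg p X) X := by
  intro v v' h
  unfold marg
  congr 1
  refine filter_congr fun t _ => forall₂_congr fun i hi => ?_
  rw [h i hi]

lemma sum_vecsOn_marg_piecewise (p : (Fin K → Bool) → ℝ) {S C : Finset (Fin K)} (hSC : S ⊆ C)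
    (v : Fin K → Bool) :
    ∑ u ∈ vecsOn (C \ S), marg p C ((C \ S).piecewise u v) = marg p S v := by
  unfold marg
  rw [eq_comm, ← sum_fiberwise_of_maps_to (g := fun t => (C \ S).piecewise t fun _ => false)
    (t := vecsOn (C \ S)) (fun t _ => piecewise_mem_vecsOn _ t)]
  refine sum_congr rfl fun u hu => ?_
  rw [filter_filter]
  congr 1
  refine filter_congr fun t _ => ?_
  have hu' := mem_vecsOn.1 hu
  constructor
  · rintro ⟨h, rfl⟩ i hi
    by_cases hiS : i ∈ S <;> simp_all
  · intro h
    refine ⟨fun i hi => ?_, funext fun i => ?_⟩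
    · have := h i (hSC hi)
      simp_all
    · by_cases hi : i ∈ C \ S
      · have := h i (mem_sdiff.1 hi).1
        simp_all
      · simp [hi, hu' i hi]

lemma sum_vecsOn_union_marg_mul (q : (Fin K → Bool) → ℝ) {U C : Finset (Fin K)}
    {h : (Fin K → Bool) → ℝ} (hh : DependsOn h U) :
    ∑ w ∈ vecsOn (U ∪ C), marg q C w * h w = ∑ w ∈ vecsOn U, marg q (C ∩ U) w * h w := by
  rw [union_comm, ← sdiff_union_self_eq_union, sum_vecsOn_union sdiff_disjoint, sum_comm]
  refine sum_congr rfl fun w _ => ?_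
  rw [← sdiff_inter_self_left C U, ← sum_vecsOn_marg_piecewise q inter_subset_left w,
    sdiff_inter_self_left, sum_mul]
  refine sum_congr rfl fun u _ => ?_
  congr 1
  exact hh fun i hi => piecewise_eq_of_notMem _ _ _ fun hi' => (mem_sdiff.1 hi').2 hi

lemma sum_mul_eq_sum_vecsOn_marg_mul (q : (Fin K → Bool) → ℝ) {X : Finset (Fin K)}
    {F : (Fin K → Bool) → ℝ} (hF : DependsOn F X) :
    ∑ t, q t * F t = ∑ w ∈ vecsOn X, marg q X w * F w := by
  have h := sum_vecsOn_union_marg_mul q (C := univ) hF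
  simpa only [union_eq_right.2 (subset_univ X), vecsOn_univ, univ_inter, marg_univ] using h

lemma sum_vecsOn_union_marg_div_mul (q : (Fin K → Bool) → ℝ) {U C : Finset (Fin K)}
    {V : (Fin K → Bool) → ℝ} (hV : DependsOn V U) (hS : ∀ w, marg q (C ∩ U) w ≠ 0) :
    ∑ w ∈ vecsOn (U ∪ C), marg q C w / marg q (C ∩ U) w * V w = ∑ w ∈ vecsOn U, V w := by
  have hVS : DependsOn (fun w => V w / marg q (C ∩ U) w) U := fun x y h => by
    dsimp only
    rw [hV h, dependsOn_marg q _ fun i hi => h i (mem_inter.1 hi).2]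
  calc ∑ w ∈ vecsOn (U ∪ C), marg q C w / marg q (C ∩ U) w * V w
      = ∑ w ∈ vecsOn (U ∪ C), marg q C w * (V w / marg q (C ∩ U) w) := by
        simp only [div_mul_eq_mul_div, mul_div_assoc]
    _ = ∑ w ∈ vecsOn U, V w := by
        rw [sum_vecsOn_union_marg_mul q hVS]
        exact sum_congr rfl fun w _ => mul_div_cancel₀ _ (hS w)

lemma le_marg {p : (Fin K → Bool) → ℝ} (hp : ∀ t, 0 ≤ p t) (X : Finset (Fin K))
    (v : Fin K → Bool) : p v ≤ marg p X v :=
  single_le_sum (fun t _ => hp t) (mem_filter.2 ⟨mem_univ v, fun _ _ => rfl⟩)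

lemma marg_pos {p : (Fin K → Bool) → ℝ} (hp : ∀ t, 0 < p t) (X : Finset (Fin K))
    (v : Fin K → Bool) : 0 < marg p X v :=
  (hp v).trans_le (le_marg (fun t => (hp t).le) X v)

end Marginals

section Gibbs

open InformationTheory

variable {ι : Type*} [Fintype ι] {r p : ι → ℝ}

lemma sum_mul_logb_div_eq_sum_mul_klFun (b : ℝ) (hp : ∀ i, 0 < p i)
    (hsum : ∑ i, r i = ∑ i, p i) :
    ∑ i, r i * Real.logb b (r i / p i) = (∑ i, p i * klFun (r i / p i)) / Real.log b := by
  have hterm : ∀ i, p i * klFun (r i / p i) = r i * Real.log (r i / p i) + (p i - r i) := by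
    intro i
    rw [klFun_apply]
    field_simp [(hp i).ne']
    ring
  simp only [hterm, sum_add_distrib, sum_sub_distrib, hsum, sub_self, add_zero, sum_div,
    Real.logb, mul_div_assoc]

lemma sum_mul_logb_div_nonneg {b : ℝ} (hb : 1 < b) (hr : ∀ i, 0 ≤ r i) (hp : ∀ i, 0 < p i)
    (hsum : ∑ i, r i = ∑ i, p i) : 0 ≤ ∑ i, r i * Real.logb b (r i / p i) := by
  rw [sum_mul_logb_div_eq_sum_mul_klFun b hp hsum]
  exact div_nonneg (sum_nonneg fun i _ => mul_nonneg (hp i).le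
    (klFun_nonneg (div_nonneg (hr i) (hp i).le))) (Real.log_pos hb).le

lemma sum_mul_logb_div_eq_zero_iff {b : ℝ} (hb : 1 < b) (hr : ∀ i, 0 ≤ r i)
    (hp : ∀ i, 0 < p i) (hsum : ∑ i, r i = ∑ i, p i) :
    ∑ i, r i * Real.logb b (r i / p i) = 0 ↔ r = p := by
  have hkl : ∀ i, 0 ≤ p i * klFun (r i / p i) := fun i =>
    mul_nonneg (hp i).le (klFun_nonneg (div_nonneg (hr i) (hp i).le))
  rw [sum_mul_logb_div_eq_sum_mul_klFun b hp hsum, div_eq_zero_iff,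
    or_iff_left (Real.log_pos hb).ne', sum_eq_zero_iff_of_nonneg fun i _ => hkl i, funext_iff]
  refine forall_congr' fun i => ?_
  rw [mul_eq_zero, or_iff_right (hp i).ne', klFun_eq_zero_iff (div_nonneg (hr i) (hp i).le),
    div_eq_one_iff_eq (hp i).ne']
  simp

end Gibbs

lemma sum_map_eq_card_mul_sum_empDist {K : ℕ} {D : Multiset (Fin K → Bool)} (hD : D ≠ 0)
    (f : (Fin K → Bool) → ℝ) :
    (D.map f).sum = Multiset.card D * ∑ v, empDist D v * f v := by
  have hcard : (Multiset.card D : ℝ) ≠ 0 := by simpa using hD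
  rw [Finset.sum_multiset_map_count, sum_subset (subset_univ D.toFinset), mul_sum]
  · refine sum_congr rfl fun v _ => ?_
    rw [empDist, nsmul_eq_mul]
    field_simp
  · intro v _ hv
    simp [Multiset.count_eq_zero.2 (by simpa using hv)]

lemma Real.logb_prod_div_prod {ι : Type*} {b : ℝ} {s u : Finset ι} {f g : ι → ℝ}
    (h : (∏ i ∈ s, f i) / ∏ i ∈ u, g i ≠ 0) :
    Real.logb b ((∏ i ∈ s, f i) / ∏ i ∈ u, g i) =
      ∑ i ∈ s, Real.logb b (f i) - ∑ i ∈ u, Real.logb b (g i) := by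
  obtain ⟨hf, hg⟩ := div_ne_zero_iff.1 h
  rw [Real.logb_div hf hg, Real.logb_prod _ _ (prod_ne_zero_iff.1 hf),
    Real.logb_prod _ _ (prod_ne_zero_iff.1 hg)]

lemma mem_segIv {K : ℕ} {o : Equiv.Perm (Fin K)} {a b : ℕ} {k : Fin K} :
    k ∈ segIv o a b ↔ a ≤ (o.symm k : ℕ) ∧ (o.symm k : ℕ) ≤ b := by
  constructor
  · simp only [segIv, mem_image, mem_filter, mem_univ, true_and]
    rintro ⟨x, hx, rfl⟩
    simpa using hx
  · exact fun h => mem_image.2 ⟨o.symm k, by simpa using h, by simp⟩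

namespace SegColl

variable {K : ℕ} (𝒞 : SegColl K) (o : Equiv.Perm (Fin K))

def span (a b : ℕ) : Finset (Fin K) := segIv o (𝒞.s a) (𝒞.e b)

lemma s_le_s {i m : ℕ} (him : i ≤ m) (hm : m < 𝒞.L) : 𝒞.s i ≤ 𝒞.s m :=
  (strictMonoOn_Iic_of_lt_succ (n := 𝒞.L - 1) fun k hk => by
    simpa using 𝒞.s_mono k (by omega)).monotoneOn
    (Set.mem_Iic.2 (by omega)) (Set.mem_Iic.2 (by omega)) him

lemma e_le_e {i m : ℕ} (him : i ≤ m) (hm : m < 𝒞.L) : 𝒞.e i ≤ 𝒞.e m :=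
  (strictMonoOn_Iic_of_lt_succ (n := 𝒞.L - 1) fun k hk => by
    simpa using 𝒞.e_mono k (by omega)).monotoneOn
    (Set.mem_Iic.2 (by omega)) (Set.mem_Iic.2 (by omega)) him

lemma span_zero_last : 𝒞.span o 0 (𝒞.L - 1) = univ := by
  ext k
  simp only [span, mem_segIv, 𝒞.s_first, 𝒞.e_last, mem_univ, iff_true]
  omega

lemma seg_subset_span {a i b : ℕ} (hai : a ≤ i) (hib : i ≤ b) (hb : b < 𝒞.L) :
    𝒞.seg o i ⊆ 𝒞.span o a b := by
  have := 𝒞.s_le_s hai (by omega)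
  have := 𝒞.e_le_e hib hb
  intro k
  simp only [seg, span, mem_segIv]
  omega

lemma span_succ_eq_span_union_seg {a b : ℕ} (hab : a ≤ b) (hb : b + 1 < 𝒞.L) :
    𝒞.span o a (b + 1) = 𝒞.span o a b ∪ 𝒞.seg o (b + 1) := by
  have := 𝒞.s_le_s hab (by omega)
  have := 𝒞.s_mono b hb
  have := 𝒞.e_mono b hb
  have := 𝒞.covers b hb
  ext k
  simp only [span, seg, mem_union, mem_segIv]
  omega

lemma seg_succ_inter_span {a b : ℕ} (hab : a ≤ b) (hb : b + 1 < 𝒞.L) :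
    𝒞.seg o (b + 1) ∩ 𝒞.span o a b = 𝒞.ovl o b := by
  have := 𝒞.s_le_s hab (by omega)
  have := 𝒞.s_mono b hb
  have := 𝒞.e_mono b hb
  ext k
  simp only [span, ovl, seg, mem_inter, mem_segIv]
  omega

lemma span_eq_span_succ_union_seg {a b : ℕ} (hab : a < b) (hb : b < 𝒞.L) :
    𝒞.span o a b = 𝒞.span o (a + 1) b ∪ 𝒞.seg o a := by
  have := 𝒞.e_le_e hab.le hb
  have := 𝒞.covers a (by omega)
  have := 𝒞.s_mono a (by omega)
  ext k
  simp only [span, seg, mem_union, mem_segIv]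
  omega

lemma seg_inter_span_succ {a b : ℕ} (hab : a < b) (hb : b < 𝒞.L) :
    𝒞.seg o a ∩ 𝒞.span o (a + 1) b = 𝒞.ovl o a := by
  have := 𝒞.e_le_e hab.le hb
  have := 𝒞.e_mono a (by omega)
  ext k
  simp only [span, ovl, seg, mem_inter, mem_segIv]
  omega

variable (q : (Fin K → Bool) → ℝ)

/-- The factorization over the segments `C_a, …, C_b`; with `q = q_D`,
`chainDensity o q 0 (L - 1)` is `p*`. -/
noncomputable def chainDensity (a b : ℕ) (t : Fin K → Bool) : ℝ :=
  (∏ i ∈ Ico a (b + 1), marg q (𝒞.seg o i) t) / ∏ i ∈ Ico a b, marg q (𝒞.ovl o i) t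

lemma chainDensity_zero_last (t : Fin K → Bool) :
    𝒞.chainDensity o q 0 (𝒞.L - 1) t =
      (∏ i ∈ range 𝒞.L, marg q (𝒞.seg o i) t) / ∏ i ∈ range (𝒞.L - 1), marg q (𝒞.ovl o i) t := by
  rw [chainDensity, ← range_eq_Ico, ← range_eq_Ico, Nat.sub_add_cancel 𝒞.hL]

lemma dependsOn_chainDensity {a b : ℕ} (hb : b < 𝒞.L) :
    DependsOn (𝒞.chainDensity o q a b) (𝒞.span o a b) := by
  intro x y h
  have hseg : ∀ i ∈ Ico a (b + 1), marg q (𝒞.seg o i) x = marg q (𝒞.seg o i) y := fun i hi =>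
    have hi := mem_Ico.1 hi
    dependsOn_marg q _ fun k hk => h k (𝒞.seg_subset_span o hi.1 (by omega) hb hk)
  have hovl : ∀ i ∈ Ico a b, marg q (𝒞.ovl o i) x = marg q (𝒞.ovl o i) y := fun i hi =>
    have hi := mem_Ico.1 hi
    dependsOn_marg q _ fun k hk =>
      h k (𝒞.seg_subset_span o hi.1 hi.2.le hb (mem_inter.1 hk).1)
  rw [chainDensity, chainDensity, prod_congr rfl hseg, prod_congr rfl hovl]

lemma chainDensity_succ_right {a b : ℕ} (hab : a ≤ b) (t : Fin K → Bool) :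
    𝒞.chainDensity o q a (b + 1) t =
      marg q (𝒞.seg o (b + 1)) t / marg q (𝒞.ovl o b) t * 𝒞.chainDensity o q a b t := by
  rw [chainDensity, chainDensity, prod_Ico_succ_top (by omega),
    prod_Ico_succ_top hab fun i => marg q (𝒞.ovl o i) t]
  ring

lemma chainDensity_eq_succ_left {a b : ℕ} (hab : a < b) (t : Fin K → Bool) :
    𝒞.chainDensity o q a b t =
      marg q (𝒞.seg o a) t / marg q (𝒞.ovl o a) t * 𝒞.chainDensity o q (a + 1) b t := by
  rw [chainDensity, chainDensity, prod_eq_prod_Ico_succ_bot (by omega),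
    prod_eq_prod_Ico_succ_bot hab]
  ring

variable {q}

lemma sum_chainDensity_mul_drop_last (hpos : ∀ i < 𝒞.L - 1, ∀ v, 0 < marg q (𝒞.ovl o i) v)
    {F : (Fin K → Bool) → ℝ} {j : ℕ} (hF : DependsOn F (𝒞.seg o j))
    {a b : ℕ} (haj : a ≤ j) (hjb : j ≤ b) (hb : b + 1 < 𝒞.L) :
    ∑ w ∈ vecsOn (𝒞.span o a (b + 1)), 𝒞.chainDensity o q a (b + 1) w * F w =
      ∑ w ∈ vecsOn (𝒞.span o a b), 𝒞.chainDensity o q a b w * F w := by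
  have hV : DependsOn (fun w => 𝒞.chainDensity o q a b w * F w) (𝒞.span o a b) :=
    fun x y h => by
      dsimp only
      rw [𝒞.dependsOn_chainDensity o q (by omega) h,
        hF fun k hk => h k (𝒞.seg_subset_span o haj hjb (by omega) hk)]
  have hS : ∀ w, marg q (𝒞.seg o (b + 1) ∩ 𝒞.span o a b) w ≠ 0 := fun w => by
    rw [𝒞.seg_succ_inter_span o (haj.trans hjb) hb]
    exact (hpos b (by omega) w).ne'
  rw [← sum_vecsOn_union_marg_div_mul q hV hS,
    ← 𝒞.span_succ_eq_span_union_seg o (haj.trans hjb) hb]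
  refine sum_congr rfl fun w _ => ?_
  rw [𝒞.seg_succ_inter_span o (haj.trans hjb) hb, 𝒞.chainDensity_succ_right o q (haj.trans hjb),
    mul_assoc]

lemma sum_chainDensity_mul_drop_first (hpos : ∀ i < 𝒞.L - 1, ∀ v, 0 < marg q (𝒞.ovl o i) v)
    {F : (Fin K → Bool) → ℝ} {j : ℕ} (hF : DependsOn F (𝒞.seg o j))
    {a : ℕ} (haj : a < j) (hj : j < 𝒞.L) :
    ∑ w ∈ vecsOn (𝒞.span o a j), 𝒞.chainDensity o q a j w * F w =
      ∑ w ∈ vecsOn (𝒞.span o (a + 1) j), 𝒞.chainDensity o q (a + 1) j w * F w := by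
  have hV : DependsOn (fun w => 𝒞.chainDensity o q (a + 1) j w * F w) (𝒞.span o (a + 1) j) :=
    fun x y h => by
      dsimp only
      rw [𝒞.dependsOn_chainDensity o q hj h,
        hF fun k hk => h k (𝒞.seg_subset_span o haj le_rfl hj hk)]
  have hS : ∀ w, marg q (𝒞.seg o a ∩ 𝒞.span o (a + 1) j) w ≠ 0 := fun w => by
    rw [𝒞.seg_inter_span_succ o haj hj]
    exact (hpos a (by omega) w).ne'
  rw [← sum_vecsOn_union_marg_div_mul q hV hS, ← 𝒞.span_eq_span_succ_union_seg o haj hj]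
  refine sum_congr rfl fun w _ => ?_
  rw [𝒞.seg_inter_span_succ o haj hj, 𝒞.chainDensity_eq_succ_left o q haj, mul_assoc]

lemma sum_chainDensity_mul_eq (hpos : ∀ i < 𝒞.L - 1, ∀ v, 0 < marg q (𝒞.ovl o i) v)
    {F : (Fin K → Bool) → ℝ} {j : ℕ} (hF : DependsOn F (𝒞.seg o j))
    {a b : ℕ} (haj : a ≤ j) (hjb : j ≤ b) (hb : b < 𝒞.L) :
    ∑ w ∈ vecsOn (𝒞.span o a b), 𝒞.chainDensity o q a b w * F w = ∑ t, q t * F t := by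
  induction b, hjb using Nat.le_induction with
  | base =>
    induction haj using Nat.decreasingInduction with
    | self => simp [sum_mul_eq_sum_vecsOn_marg_mul q hF, chainDensity, span, seg]
    | of_succ a haj ih => rw [𝒞.sum_chainDensity_mul_drop_first o hpos hF haj hb, ih]
  | succ b hjb ih =>
    rw [𝒞.sum_chainDensity_mul_drop_last o hpos hF haj hjb hb, ih (by omega)]


theorem sum_chainDensity_mul_eq_of_dependsOn_seg
    (hpos : ∀ i < 𝒞.L - 1, ∀ v, 0 < marg q (𝒞.ovl o i) v) {F : (Fin K → Bool) → ℝ} {j : ℕ}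
    (hj : j < 𝒞.L) (hF : DependsOn F (𝒞.seg o j)) :
    ∑ t, 𝒞.chainDensity o q 0 (𝒞.L - 1) t * F t = ∑ t, q t * F t := by
  simpa only [span_zero_last, vecsOn_univ] using
    𝒞.sum_chainDensity_mul_eq o hpos hF (b := 𝒞.L - 1) (Nat.zero_le j) (by omega) (by omega)

noncomputable def logbFactored (r : (Fin K → Bool) → ℝ) (t : Fin K → Bool) : ℝ :=
  ∑ i ∈ range 𝒞.L, Real.logb 2 (marg r (𝒞.seg o i) t) -
    ∑ i ∈ range (𝒞.L - 1), Real.logb 2 (marg r (𝒞.ovl o i) t)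

theorem sum_chainDensity_mul_logbFactored
    (hpos : ∀ i < 𝒞.L - 1, ∀ v, 0 < marg q (𝒞.ovl o i) v) (r : (Fin K → Bool) → ℝ) :
    ∑ t, 𝒞.chainDensity o q 0 (𝒞.L - 1) t * 𝒞.logbFactored o r t =
      ∑ t, q t * 𝒞.logbFactored o r t := by
  have hlogb : ∀ X : Finset (Fin K), DependsOn (fun t => Real.logb 2 (marg r X t)) X :=
    fun X x y h => congrArg _ (dependsOn_marg r X h)
  simp only [logbFactored, mul_sub, mul_sum, sum_sub_distrib, sum_comm (s := univ)]
  congr 1 <;> refine sum_congr rfl fun i hi => ?_ <;> have hi := mem_range.1 hi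
  · exact 𝒞.sum_chainDensity_mul_eq_of_dependsOn_seg o hpos hi (hlogb _)
  · exact 𝒞.sum_chainDensity_mul_eq_of_dependsOn_seg o hpos (by omega)
      ((hlogb _).mono (coe_subset.2 inter_subset_left))

lemma logb_eq_logbFactored {p : (Fin K → Bool) → ℝ} (hp : memModel o 𝒞 p) (hppos : ∀ t, 0 < p t)
    (t : Fin K → Bool) : Real.logb 2 (p t) = 𝒞.logbFactored o p t := by
  have hden : ∏ i ∈ range (𝒞.L - 1), marg p (𝒞.ovl o i) t ≠ 0 :=
    (prod_pos fun i _ => marg_pos hppos _ t).ne'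
  have hp_eq := eq_div_of_mul_eq hden (hp.2 t)
  rw [hp_eq, Real.logb_prod_div_prod (hp_eq ▸ (hppos t).ne'), logbFactored]

lemma logb_chainDensity {t : Fin K → Bool} (ht : 𝒞.chainDensity o q 0 (𝒞.L - 1) t ≠ 0) :
    Real.logb 2 (𝒞.chainDensity o q 0 (𝒞.L - 1) t) = 𝒞.logbFactored o q t := by
  rw [chainDensity_zero_last] at ht ⊢
  rw [Real.logb_prod_div_prod ht, logbFactored]

lemma eq_zero_of_chainDensity_eq_zero (hq : ∀ t, 0 ≤ q t)
    (hpos : ∀ i < 𝒞.L - 1, ∀ v, 0 < marg q (𝒞.ovl o i) v) {t : Fin K → Bool}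
    (ht : 𝒞.chainDensity o q 0 (𝒞.L - 1) t = 0) : q t = 0 := by
  rw [chainDensity_zero_last, div_eq_zero_iff, prod_eq_zero_iff, prod_eq_zero_iff] at ht
  obtain ⟨i, -, hi⟩ | ⟨i, hi, hi0⟩ := ht
  · exact le_antisymm (hi ▸ le_marg hq _ t) (hq t)
  · exact absurd hi0 (hpos i (mem_range.1 hi) t).ne'

theorem sum_mul_logb_chainDensity_sub_logb (hq : ∀ t, 0 ≤ q t)
    (hpos : ∀ i < 𝒞.L - 1, ∀ v, 0 < marg q (𝒞.ovl o i) v)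
    {p : (Fin K → Bool) → ℝ} (hp : memModel o 𝒞 p) (hppos : ∀ t, 0 < p t) :
    ∑ v, q v * (Real.logb 2 (𝒞.chainDensity o q 0 (𝒞.L - 1) v) - Real.logb 2 (p v)) =
      ∑ v, 𝒞.chainDensity o q 0 (𝒞.L - 1) v *
        Real.logb 2 (𝒞.chainDensity o q 0 (𝒞.L - 1) v / p v) := by
  set pstar := 𝒞.chainDensity o q 0 (𝒞.L - 1)
  have hlogb : ∀ v, pstar v ≠ 0 → Real.logb 2 (pstar v) - Real.logb 2 (p v) =
      𝒞.logbFactored o q v - 𝒞.logbFactored o p v := fun v hv => by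
    rw [𝒞.logb_chainDensity o hv, 𝒞.logb_eq_logbFactored o hp hppos]
  calc ∑ v, q v * (Real.logb 2 (pstar v) - Real.logb 2 (p v))
      = ∑ v, q v * (𝒞.logbFactored o q v - 𝒞.logbFactored o p v) := by
        refine sum_congr rfl fun v _ => ?_
        by_cases hv : pstar v = 0
        · simp [𝒞.eq_zero_of_chainDensity_eq_zero o hq hpos hv]
        · rw [hlogb v hv]
    _ = ∑ v, pstar v * (𝒞.logbFactored o q v - 𝒞.logbFactored o p v) := by
        simp only [mul_sub, sum_sub_distrib, 𝒞.sum_chainDensity_mul_logbFactored o hpos, pstar]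
    _ = ∑ v, pstar v * Real.logb 2 (pstar v / p v) := by
        refine sum_congr rfl fun v _ => ?_
        by_cases hv : pstar v = 0
        · simp [hv]
        · rw [← hlogb v hv, Real.logb_div hv (hppos v).ne']

end SegColl

/-- `p*` maximizes the likelihood of `D` over `M(𝒞)`: the difference of
log-likelihoods is `|D|` times the Kullback–Leibler divergence from `p` to `p*`, which is
non-negative and zero iff `p = p*`. -/
theorem pstar_maximizes_likelihood {K : ℕ} (D : Multiset (Fin K → Bool)) (hD : D ≠ 0)
    (o : Equiv.Perm (Fin K)) (𝒞 : SegColl K)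
    (hpos : ∀ i < 𝒞.L - 1, ∀ v : Fin K → Bool, 0 < marg (empDist D) (𝒞.ovl o i) v)
    (pstar : (Fin K → Bool) → ℝ)
    (hpstar : ∀ t : Fin K → Bool, pstar t =
      (∏ i ∈ Finset.range 𝒞.L, marg (empDist D) (𝒞.seg o i) t) /
        ∏ i ∈ Finset.range (𝒞.L - 1), marg (empDist D) (𝒞.ovl o i) t)
    (hpstarM : memModel o 𝒞 pstar)
    (p : (Fin K → Bool) → ℝ) (hpMem : memModel o 𝒞 p) (hppos : ∀ t, 0 < p t) :
    ((D.map fun t => Real.logb 2 (pstar t)).sum - (D.map fun t => Real.logb 2 (p t)).sum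
      = (Multiset.card D : ℝ) *
        ∑ v : Fin K → Bool, pstar v * Real.logb 2 (pstar v / p v)) ∧
    (0 ≤ (D.map fun t => Real.logb 2 (pstar t)).sum
        - (D.map fun t => Real.logb 2 (p t)).sum) ∧
    ((D.map fun t => Real.logb 2 (pstar t)).sum - (D.map fun t => Real.logb 2 (p t)).sum = 0
      ↔ p = pstar) := by
  have hchain : 𝒞.chainDensity o (empDist D) 0 (𝒞.L - 1) = pstar :=
    funext fun t => (𝒞.chainDensity_zero_last o _ t).trans (hpstar t).symm
  have hq : ∀ t, 0 ≤ empDist D t := fun t => div_nonneg (Nat.cast_nonneg _) (Nat.cast_nonneg _)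
  have hlik : (D.map fun t => Real.logb 2 (pstar t)).sum - (D.map fun t => Real.logb 2 (p t)).sum
      = Multiset.card D * ∑ v, pstar v * Real.logb 2 (pstar v / p v) := by
    rw [sum_map_eq_card_mul_sum_empDist hD, sum_map_eq_card_mul_sum_empDist hD, ← mul_sub,
      ← sum_sub_distrib, ← hchain, ← 𝒞.sum_mul_logb_chainDensity_sub_logb o hq hpos hpMem hppos]
    simp only [mul_sub]
  have hcard : (0 : ℝ) < Multiset.card D := by exact_mod_cast Multiset.card_pos.2 hD
  have hsum := hpstarM.1.2.trans hpMem.1.2.symm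
  refine ⟨hlik, ?_, ?_⟩
  · rw [hlik]
    exact mul_nonneg hcard.le (sum_mul_logb_div_nonneg one_lt_two hpstarM.1.1 hppos hsum)
  · rw [hlik, mul_eq_zero, or_iff_right hcard.ne',
      sum_mul_logb_div_eq_zero_iff one_lt_two hpstarM.1.1 hppos hsum, eq_comm]
end

section
/- Let D be a binary dataset, o a linear order on the K attributes, and 𝒞 = {C_1,…,C_L} ∈ Seg(o) with q_D(S_i = v) > 0 for all i and v, and let p* ∈ M(𝒞) be the distribution with p*(A = t) = (∏_i q_D(C_i = t_{C_i})) / (∏_i q_D(S_i = t_{S_i})). Then the log-likelihood of D under p* decomposes into entropies of segments: ∑_{t∈D} log₂ p*(A = t) = −|D| ∑_{i=1}^{L} H(C_i; D) + |D| ∑_{i=1}^{L−1} H(S_i; D). -/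
open Finset

lemma sum_count_logb_marg {K : ℕ} (D : Multiset (Fin K → Bool)) (hD : D ≠ 0)
    (X : Finset (Fin K)) :
    ∑ t : Fin K → Bool, (D.count t : ℝ) * Real.logb 2 (marg (empDist D) X t)
      = -(Multiset.card D : ℝ) * segEntropy (empDist D) X := by
  classical
  have hcard : (Multiset.card D : ℝ) ≠ 0 := by
    have : 0 < Multiset.card D := Multiset.card_pos.mpr hD
    exact_mod_cast this.ne'
  have hmaps : ∀ t : Fin K → Bool, t ∈ (Finset.univ : Finset (Fin K → Bool)) →
      (fun i => if i ∈ X then t i else false) ∈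
        Finset.univ.filter (fun v : Fin K → Bool => ∀ i, i ∉ X → v i = false) := by
    intro t _
    simp only [mem_filter, mem_univ, true_and]
    intro i hi; simp [hi]
  rw [← Finset.sum_fiberwise_of_maps_to hmaps
        (fun t => (D.count t : ℝ) * Real.logb 2 (marg (empDist D) X t))]
  unfold segEntropy
  rw [neg_mul_neg, Finset.mul_sum]
  apply Finset.sum_congr rfl
  intro v hv
  simp only [mem_filter, mem_univ, true_and] at hv
  have hfib : Finset.univ.filter
        (fun t : Fin K → Bool => (fun i => if i ∈ X then t i else false) = v)
      = Finset.univ.filter (fun t : Fin K → Bool => ∀ i ∈ X, t i = v i) := by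
    apply Finset.filter_congr
    intro u _
    rw [funext_iff]
    constructor
    · intro h i hi
      have := h i; simpa [hi] using this
    · intro h i
      by_cases hi : i ∈ X
      · simpa [hi] using h i hi
      · simp [hi, hv i hi]
  rw [hfib]
  have hmargv : ∀ t ∈ Finset.univ.filter (fun t : Fin K → Bool => ∀ i ∈ X, t i = v i),
      (D.count t : ℝ) * Real.logb 2 (marg (empDist D) X t)
        = (D.count t : ℝ) * Real.logb 2 (marg (empDist D) X v) := by
    intro t ht
    simp only [mem_filter, mem_univ, true_and] at ht
    have : marg (empDist D) X t = marg (empDist D) X v := by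
      unfold marg
      apply Finset.sum_congr _ (fun _ _ => rfl)
      apply Finset.filter_congr
      intro u _
      constructor <;> intro h i hi
      · rw [h i hi, ht i hi]
      · rw [h i hi, ← ht i hi]
    rw [this]
  rw [Finset.sum_congr rfl hmargv, ← Finset.sum_mul]
  have hsum : ∑ t ∈ Finset.univ.filter (fun t : Fin K → Bool => ∀ i ∈ X, t i = v i),
      (D.count t : ℝ) = (Multiset.card D : ℝ) * marg (empDist D) X v := by
    unfold marg empDist
    rw [Finset.mul_sum]
    apply Finset.sum_congr rfl
    intro t _
    field_simp
  rw [hsum]; ring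

/-- The log-likelihood of `D` under `p*` decomposes into entropies:
`∑_{t∈D} log₂ p*(A = t) = -|D| ∑ H(C_i; D) + |D| ∑ H(S_i; D)`. -/
theorem pstar_loglik_entropy_decomposition {K : ℕ} (D : Multiset (Fin K → Bool)) (hD : D ≠ 0)
    (o : Equiv.Perm (Fin K)) (𝒞 : SegColl K)
    (hpos : ∀ i < 𝒞.L - 1, ∀ v : Fin K → Bool, 0 < marg (empDist D) (𝒞.ovl o i) v)
    (pstar : (Fin K → Bool) → ℝ)
    (hpstar : ∀ t : Fin K → Bool, pstar t =
      (∏ i ∈ Finset.range 𝒞.L, marg (empDist D) (𝒞.seg o i) t) /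
        ∏ i ∈ Finset.range (𝒞.L - 1), marg (empDist D) (𝒞.ovl o i) t)
    (hpstarM : memModel o 𝒞 pstar) :
    (D.map fun t => Real.logb 2 (pstar t)).sum
      = -(Multiset.card D : ℝ) *
          (∑ i ∈ Finset.range 𝒞.L, segEntropy (empDist D) (𝒞.seg o i))
        + (Multiset.card D : ℝ) *
          ∑ i ∈ Finset.range (𝒞.L - 1), segEntropy (empDist D) (𝒞.ovl o i) := by
  classical
  have hDcard : (0:ℝ) < (Multiset.card D : ℝ) := by
    have : 0 < Multiset.card D := Multiset.card_pos.mpr hD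
    exact_mod_cast this
  have hmsum : (D.map fun t => Real.logb 2 (pstar t)).sum
      = ∑ t : Fin K → Bool, (D.count t : ℝ) * Real.logb 2 (pstar t) := by
    rw [Finset.sum_multiset_map_count,
      ← Finset.sum_subset (Finset.subset_univ D.toFinset)]
    · apply Finset.sum_congr rfl; intro t _; rw [nsmul_eq_mul]
    · intro t _ ht
      rw [Multiset.count_eq_zero_of_notMem (by simpa using ht)]
      simp
  rw [hmsum]
  have hpt : ∀ t : Fin K → Bool, (D.count t : ℝ) * Real.logb 2 (pstar t)
      = (D.count t : ℝ) *
          ((∑ i ∈ Finset.range 𝒞.L, Real.logb 2 (marg (empDist D) (𝒞.seg o i) t))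
            - ∑ i ∈ Finset.range (𝒞.L - 1), Real.logb 2 (marg (empDist D) (𝒞.ovl o i) t)) := by
    intro t
    by_cases hct : t ∈ D
    · have hemp : 0 < empDist D t := by
        have : 0 < D.count t := Multiset.count_pos.mpr hct
        unfold empDist
        apply div_pos _ hDcard
        exact_mod_cast this
      have hCpos : ∀ i ∈ Finset.range 𝒞.L, 0 < marg (empDist D) (𝒞.seg o i) t := by
        intro i _
        have hle : empDist D t ≤ marg (empDist D) (𝒞.seg o i) t := by
          apply Finset.single_le_sum (f := empDist D)
          · intro u _
            unfold empDist; positivity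
          · simp
        linarith
      have hSpos : ∀ i ∈ Finset.range (𝒞.L - 1), 0 < marg (empDist D) (𝒞.ovl o i) t :=
        fun i hi => hpos i (Finset.mem_range.mp hi) t
      congr 1
      rw [hpstar t,
        Real.logb_div (Finset.prod_ne_zero_iff.mpr fun i hi => (hCpos i hi).ne')
          (Finset.prod_ne_zero_iff.mpr fun i hi => (hSpos i hi).ne'),
        Real.logb_prod _ _ (fun i hi => (hCpos i hi).ne'),
        Real.logb_prod _ _ (fun i hi => (hSpos i hi).ne')]
    · rw [Multiset.count_eq_zero_of_notMem hct]
      simp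
  rw [Finset.sum_congr rfl fun t _ => hpt t]
  simp only [mul_sub, Finset.mul_sum, Finset.sum_sub_distrib]
  rw [Finset.sum_comm, Finset.sum_comm (t := Finset.range (𝒞.L - 1))]
  rw [Finset.sum_congr rfl fun i _ => sum_count_logb_marg D hD (𝒞.seg o i),
    Finset.sum_congr rfl fun i _ => sum_count_logb_marg D hD (𝒞.ovl o i),
    ]
  simp only [neg_mul, Finset.sum_neg_distrib, ← Finset.mul_sum]
  ring
end

section
/- Let D be a binary dataset, o a linear order on the K attributes, and 𝒞 = {C_1,…,C_L} ∈ Seg(o) with q_D(S_i = v) > 0 for all i and v, and let p* ∈ M(𝒞) be the distribution with p*(A = t) = (∏_i q_D(C_i = t_{C_i})) / (∏_i q_D(S_i = t_{S_i})). Then the score of 𝒞 equals the BIC cost of the maximum-likelihood model: score(𝒞) = −∑_{t∈D} log₂ p*(A = t) + (log₂|D| / 2) · df(𝒞). -/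
open Finset

lemma map_sum_eq_aux {K : ℕ} (D : Multiset (Fin K → Bool)) (f : (Fin K → Bool) → ℝ) :
    (D.map f).sum = ∑ t : Fin K → Bool, (D.count t : ℝ) * f t := by
  rw [Finset.sum_multiset_map_count,
    ← Finset.sum_subset (Finset.subset_univ D.toFinset)
      (fun t _ ht => by simp [Multiset.count_eq_zero_of_notMem (by simpa using ht)])]
  exact Finset.sum_congr rfl fun t _ => by simp [nsmul_eq_mul]

lemma marg_congr_aux {K : ℕ} (p : (Fin K → Bool) → ℝ) (X : Finset (Fin K))
    {t v : Fin K → Bool} (h : ∀ i ∈ X, t i = v i) : marg p X t = marg p X v := by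
  unfold marg
  refine Finset.sum_congr ?_ (fun _ _ => rfl)
  ext u
  simp only [Finset.mem_filter, Finset.mem_univ, true_and]
  exact ⟨fun h2 i hi => (h2 i hi).trans (h i hi),
    fun h2 i hi => (h2 i hi).trans (h i hi).symm⟩

lemma marg_pos_of_mem_aux {K : ℕ} (D : Multiset (Fin K → Bool))
    (X : Finset (Fin K)) {t} (ht : t ∈ D) : 0 < marg (empDist D) X t := by
  have hcard : 0 < (Multiset.card D : ℝ) := by
    exact_mod_cast Multiset.card_pos.mpr (fun h => by simp [h] at ht)
  unfold marg
  apply Finset.sum_pos'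
  · intro u _
    exact div_nonneg (Nat.cast_nonneg _) (Nat.cast_nonneg _)
  · refine ⟨t, by simp, ?_⟩
    unfold empDist
    exact div_pos (by exact_mod_cast Multiset.count_pos.mpr ht) hcard

lemma count_logb_marg_aux {K : ℕ} (D : Multiset (Fin K → Bool)) (hD : D ≠ 0)
    (X : Finset (Fin K)) :
    ∑ t : Fin K → Bool, (D.count t : ℝ) * Real.logb 2 (marg (empDist D) X t)
      = -((Multiset.card D : ℝ) * segEntropy (empDist D) X) := by
  have hcard : (Multiset.card D : ℝ) ≠ 0 := by
    exact_mod_cast Multiset.card_pos.mpr hD |>.ne'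
  set r : (Fin K → Bool) → (Fin K → Bool) :=
    fun t i => if i ∈ X then t i else false with hr
  have hmaps : ∀ t ∈ (Finset.univ : Finset (Fin K → Bool)),
      r t ∈ Finset.univ.filter (fun v : Fin K → Bool => ∀ i, i ∉ X → v i = false) := by
    intro t _
    simp only [Finset.mem_filter, Finset.mem_univ, true_and, hr]
    intro i hi
    simp [hi]
  have hsum := Finset.sum_fiberwise_of_maps_to hmaps
    (fun t => (D.count t : ℝ) * Real.logb 2 (marg (empDist D) X t))
  rw [← hsum]
  unfold segEntropy
  rw [mul_neg, neg_neg, Finset.mul_sum]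
  refine Finset.sum_congr rfl ?_
  intro v hv
  simp only [Finset.mem_filter, Finset.mem_univ, true_and] at hv
  have hfib : Finset.univ.filter (fun t => r t = v)
      = Finset.univ.filter (fun t : Fin K → Bool => ∀ i ∈ X, t i = v i) := by
    ext u
    simp only [Finset.mem_filter, Finset.mem_univ, true_and, hr]
    constructor
    · intro h i hi
      have := congrFun h i
      simpa [hi] using this
    · intro h
      funext i
      by_cases hi : i ∈ X
      · simpa [hi] using h i hi
      · simp [hi, hv i hi]
  rw [hfib]
  have hmargv : marg (empDist D) X v
      = (∑ t ∈ Finset.univ.filter (fun t : Fin K → Bool => ∀ i ∈ X, t i = v i),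
          (D.count t : ℝ)) / (Multiset.card D : ℝ) := by
    unfold marg empDist
    rw [Finset.sum_div]
  have hcnt : ∑ t ∈ Finset.univ.filter (fun t : Fin K → Bool => ∀ i ∈ X, t i = v i),
      (D.count t : ℝ) = (Multiset.card D : ℝ) * marg (empDist D) X v := by
    rw [hmargv]; field_simp
  have hconst : ∀ t ∈ Finset.univ.filter (fun t : Fin K → Bool => ∀ i ∈ X, t i = v i),
      (D.count t : ℝ) * Real.logb 2 (marg (empDist D) X t)
        = (D.count t : ℝ) * Real.logb 2 (marg (empDist D) X v) := by
    intro t ht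
    simp only [Finset.mem_filter, Finset.mem_univ, true_and] at ht
    rw [marg_congr_aux _ _ ht]
  rw [Finset.sum_congr rfl hconst, ← Finset.sum_mul, hcnt]
  ring

/-- The score of `𝒞` is the BIC cost of the maximum-likelihood model:
`score(𝒞) = -∑_{t∈D} log₂ p*(A = t) + (log₂|D|/2) df(𝒞)`. -/
theorem score_eq_bic_cost {K : ℕ} (D : Multiset (Fin K → Bool)) (hD : D ≠ 0)
    (o : Equiv.Perm (Fin K)) (𝒞 : SegColl K)
    (hpos : ∀ i < 𝒞.L - 1, ∀ v : Fin K → Bool, 0 < marg (empDist D) (𝒞.ovl o i) v)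
    (pstar : (Fin K → Bool) → ℝ)
    (hpstar : ∀ t : Fin K → Bool, pstar t =
      (∏ i ∈ Finset.range 𝒞.L, marg (empDist D) (𝒞.seg o i) t) /
        ∏ i ∈ Finset.range (𝒞.L - 1), marg (empDist D) (𝒞.ovl o i) t)
    (hpstarM : memModel o 𝒞 pstar) :
    collScore D o 𝒞
      = -(D.map fun t => Real.logb 2 (pstar t)).sum
        + Real.logb 2 (Multiset.card D) / 2 * (𝒞.df o : ℝ) := by
  have hLog := hpstarM
  have hcardpos : (0:ℝ) < (Multiset.card D : ℝ) := by
    exact_mod_cast Multiset.card_pos.mpr hD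
  set c : ℝ := Real.logb 2 (Multiset.card D) / 2 with hc
  -- pointwise decomposition
  have hlog : ∀ t : Fin K → Bool, (D.count t : ℝ) * Real.logb 2 (pstar t)
      = (D.count t : ℝ) *
        ((∑ i ∈ Finset.range 𝒞.L, Real.logb 2 (marg (empDist D) (𝒞.seg o i) t))
        - ∑ i ∈ Finset.range (𝒞.L - 1), Real.logb 2 (marg (empDist D) (𝒞.ovl o i) t)) := by
    intro t
    by_cases ht : t ∈ D
    · have hnum : ∀ i ∈ Finset.range 𝒞.L, marg (empDist D) (𝒞.seg o i) t ≠ 0 :=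
        fun i _ => (marg_pos_of_mem_aux D _ ht).ne'
      have hden : ∀ i ∈ Finset.range (𝒞.L - 1), marg (empDist D) (𝒞.ovl o i) t ≠ 0 :=
        fun i hi => (hpos i (Finset.mem_range.mp hi) t).ne'
      congr 1
      rw [hpstar t, Real.logb_div (Finset.prod_ne_zero_iff.mpr hnum)
        (Finset.prod_ne_zero_iff.mpr hden), Real.logb_prod _ _ hnum,
        Real.logb_prod _ _ hden]
    · simp [Multiset.count_eq_zero_of_notMem ht]
  have hmap : (D.map fun t => Real.logb 2 (pstar t)).sum
      = -((Multiset.card D : ℝ) *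
          ((∑ i ∈ Finset.range 𝒞.L, segEntropy (empDist D) (𝒞.seg o i))
          - ∑ i ∈ Finset.range (𝒞.L - 1), segEntropy (empDist D) (𝒞.ovl o i))) := by
    rw [map_sum_eq_aux, Finset.sum_congr rfl (fun t _ => hlog t)]
    have expand : ∑ t : Fin K → Bool, (D.count t : ℝ) *
        ((∑ i ∈ Finset.range 𝒞.L, Real.logb 2 (marg (empDist D) (𝒞.seg o i) t))
        - ∑ i ∈ Finset.range (𝒞.L - 1), Real.logb 2 (marg (empDist D) (𝒞.ovl o i) t))
        = (∑ i ∈ Finset.range 𝒞.L, ∑ t : Fin K → Bool,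
            (D.count t : ℝ) * Real.logb 2 (marg (empDist D) (𝒞.seg o i) t))
        - ∑ i ∈ Finset.range (𝒞.L - 1), ∑ t : Fin K → Bool,
            (D.count t : ℝ) * Real.logb 2 (marg (empDist D) (𝒞.ovl o i) t) := by
      rw [Finset.sum_congr rfl
        (fun t _ => by rw [mul_sub, Finset.mul_sum, Finset.mul_sum]),
        Finset.sum_sub_distrib]
      congr 1 <;> rw [Finset.sum_comm]
    rw [expand]
    rw [Finset.sum_congr rfl (fun i _ => count_logb_marg_aux D hD (𝒞.seg o i)),
        Finset.sum_congr rfl (fun i _ => count_logb_marg_aux D hD (𝒞.ovl o i))]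
    rw [Finset.sum_neg_distrib, Finset.sum_neg_distrib]
    simp only [← Finset.mul_sum]
    ring
  have hdf : ((𝒞.df o : ℤ) : ℝ)
      = (∑ i ∈ Finset.range 𝒞.L, ((2:ℝ) ^ (𝒞.seg o i).card - 1))
        - ∑ i ∈ Finset.range (𝒞.L - 1), ((2:ℝ) ^ (𝒞.ovl o i).card - 1) := by
    unfold SegColl.df
    push_cast
    ring
  rw [hmap, hdf]
  unfold collScore segScore
  rw [Finset.sum_add_distrib, Finset.sum_add_distrib, ← Finset.mul_sum, ← Finset.mul_sum,
    ← Finset.mul_sum, ← Finset.mul_sum]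
  ring
end

section
/- Let p be a strictly positive probability distribution on {0,1}^K, let V and W be sets of attributes with V ∪ W = A (all attributes) and H = V ∩ W, and suppose there exist functions f and g such that log p(A = t) = f(t_V) + g(t_W) for every t ∈ {0,1}^K (f depending only on the coordinates in V and g only on those in W). Then p(A = t) · p(H = t_H) = p(V = t_V) · p(W = t_W) for every t; that is, V − H and W − H are conditionally independent given H. -/
open Finset

/-- If `V ∪ W = A` and `log p(A = t)` splits as a sum of a function of
`t_V` and a function of `t_W`, then `p(A = t) p(H = t_H) = p(V = t_V) p(W = t_W)` where
`H = V ∩ W`; that is, `V - H` and `W - H` are conditionally independent given `H`. -/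
theorem log_additive_implies_cond_indep {K : ℕ} (p : (Fin K → Bool) → ℝ)
    (hdist : IsDist p) (hpos : ∀ t, 0 < p t)
    (V W : Finset (Fin K)) (hVW : V ∪ W = Finset.univ)
    (f g : (Fin K → Bool) → ℝ)
    (hf : ∀ t u : Fin K → Bool, (∀ i ∈ V, t i = u i) → f t = f u)
    (hg : ∀ t u : Fin K → Bool, (∀ i ∈ W, t i = u i) → g t = g u)
    (hlog : ∀ t : Fin K → Bool, Real.log (p t) = f t + g t) :
    ∀ t : Fin K → Bool, p t * marg p (V ∩ W) t = marg p V t * marg p W t := by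
  classical
  intro t
  set F : (Fin K → Bool) → ℝ := fun u => Real.exp (f u) with hFdef
  set G : (Fin K → Bool) → ℝ := fun u => Real.exp (g u) with hGdef
  have hp : ∀ u, p u = F u * G u := fun u => by
    rw [← Real.exp_log (hpos u), hlog, Real.exp_add]
  have hF : ∀ u v : Fin K → Bool, (∀ i ∈ V, u i = v i) → F u = F v := by
    intro u v h; simp only [hFdef]; rw [hf u v h]
  have hG : ∀ u v : Fin K → Bool, (∀ i ∈ W, u i = v i) → G u = G v := by
    intro u v h; simp only [hGdef]; rw [hg u v h]
  have hcov : ∀ i : Fin K, i ∉ V → i ∈ W := by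
    intro i hi
    have := Finset.mem_univ i
    rw [← hVW, Finset.mem_union] at this
    tauto
  have key : ∑ u ∈ Finset.univ.filter (fun u : Fin K → Bool => ∀ i ∈ V ∩ W, u i = t i),
        F u * G u
      = (∑ a ∈ Finset.univ.filter (fun u : Fin K → Bool => ∀ i ∈ V, u i = t i), G a)
        * (∑ b ∈ Finset.univ.filter (fun u : Fin K → Bool => ∀ i ∈ W, u i = t i), F b) := by
    rw [Finset.sum_mul_sum, ← Finset.sum_product']
    refine Finset.sum_nbij'
      (i := fun u => ((fun i => if i ∈ V then t i else u i : Fin K → Bool),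
                      (fun i => if i ∈ W then t i else u i : Fin K → Bool)))
      (j := fun q => (fun i => if i ∈ V then q.2 i else q.1 i : Fin K → Bool))
      ?_ ?_ ?_ ?_ ?_
    · intro u hu
      simp only [Finset.mem_filter, Finset.mem_univ, true_and] at hu ⊢
      rw [Finset.mem_product]
      constructor
      · simp only [Finset.mem_filter, Finset.mem_univ, true_and]
        intro i hi; simp [hi]
      · simp only [Finset.mem_filter, Finset.mem_univ, true_and]
        intro i hi; simp [hi]
    · intro q hq
      rw [Finset.mem_product] at hq
      obtain ⟨h1, h2⟩ := hq
      simp only [Finset.mem_filter, Finset.mem_univ, true_and] at h1 h2 ⊢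
      intro i hi
      rw [Finset.mem_inter] at hi
      simp [hi.1, h2 i hi.2]
    · intro u hu
      simp only [Finset.mem_filter, Finset.mem_univ, true_and] at hu
      funext i
      by_cases hiV : i ∈ V
      · by_cases hiW : i ∈ W
        · simp [hiV, hiW, (hu i (Finset.mem_inter.2 ⟨hiV, hiW⟩)).symm]
        · simp [hiV, hiW]
      · simp [hiV]
    · intro q hq
      rw [Finset.mem_product] at hq
      obtain ⟨h1, h2⟩ := hq
      simp only [Finset.mem_filter, Finset.mem_univ, true_and] at h1 h2
      refine Prod.ext ?_ ?_
      · funext i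
        by_cases hiV : i ∈ V
        · simp [hiV, h1 i hiV]
        · simp [hiV]
      · funext i
        by_cases hiW : i ∈ W
        · simp [hiW, h2 i hiW]
        · by_cases hiV : i ∈ V
          · simp [hiV, hiW]
          · exact absurd (hcov i hiV) hiW
    · intro u hu
      simp only [Finset.mem_filter, Finset.mem_univ, true_and] at hu
      have e1 : G (fun i => if i ∈ V then t i else u i) = G u := by
        refine hG _ _ fun i hi => ?_
        by_cases hiV : i ∈ V
        · simp [hiV, (hu i (Finset.mem_inter.2 ⟨hiV, hi⟩)).symm]
        · simp [hiV]
      have e2 : F (fun i => if i ∈ W then t i else u i) = F u := by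
        refine hF _ _ fun i hi => ?_
        by_cases hiW : i ∈ W
        · simp [hiW, (hu i (Finset.mem_inter.2 ⟨hi, hiW⟩)).symm]
        · simp [hiW]
      rw [e1, e2]; ring
  have hmH : marg p (V ∩ W) t
      = ∑ u ∈ Finset.univ.filter (fun u : Fin K → Bool => ∀ i ∈ V ∩ W, u i = t i),
          F u * G u := by
    unfold marg; exact Finset.sum_congr rfl fun u _ => hp u
  have hmV : marg p V t
      = F t * ∑ a ∈ Finset.univ.filter (fun u : Fin K → Bool => ∀ i ∈ V, u i = t i), G a := by
    unfold marg
    rw [Finset.mul_sum]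
    refine Finset.sum_congr rfl fun u hu => ?_
    simp only [Finset.mem_filter, Finset.mem_univ, true_and] at hu
    rw [hp u, hF u t hu]
  have hmW : marg p W t
      = G t * ∑ b ∈ Finset.univ.filter (fun u : Fin K → Bool => ∀ i ∈ W, u i = t i), F b := by
    unfold marg
    rw [Finset.mul_sum]
    refine Finset.sum_congr rfl fun u hu => ?_
    simp only [Finset.mem_filter, Finset.mem_univ, true_and] at hu
    rw [hp u, hG u t hu]; ring
  rw [hmH, hmV, hmW, hp t, key]; ring
end
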